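/- arXiv:2512.17502 — 2 statements merged into one kernel-verified Lean document; each statement's English description precedes it below -/
import Mathlib

section
/- With K the reproducing kernel of an admissible vector u (so that V is an isometry H → L²(G)), the kernel satisfies the convolution idempotence K ∗ K = K in L²(G). -/
/-!
Polarization upgrades admissibility, `∫ ‖V v‖² = ‖v‖²`, to `∫ conj (V v) · V w = ⟪v, w⟫`.
Unitarity and the homomorphism property give `K (y⁻¹ x) = conj (V (U x u) y)`, so
`(K ∗ K)(x) = ∫ conj (V (U x u)) · V u = ⟪U x u, u⟫ = K x`.
-/

open MeasureTheory

section Polarization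

variable {α 𝕜 E : Type*} [MeasurableSpace α] {μ : Measure α} [RCLike 𝕜]
  [NormedAddCommGroup E] [InnerProductSpace 𝕜 E] {T : E →ₗ[𝕜] α → 𝕜}

theorem integrable_norm_sq_of_integral_norm_sq_eq
    (hT : ∀ v, ∫ x, ‖T v x‖ ^ 2 ∂μ = ‖v‖ ^ 2) (v : E) :
    Integrable (fun x ↦ ((‖T v x‖ : 𝕜)) ^ 2) μ := by
  obtain rfl | hv := eq_or_ne v 0
  · simp
  have : Integrable (fun x ↦ ‖T v x‖ ^ 2) μ :=
    .of_integral_ne_zero (by rw [hT]; positivity)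
  simpa using this.ofReal (𝕜 := 𝕜)

theorem integral_norm_sq_eq_of_integral_norm_sq_eq
    (hT : ∀ v, ∫ x, ‖T v x‖ ^ 2 ∂μ = ‖v‖ ^ 2) (v : E) :
    ∫ x, ((‖T v x‖ : 𝕜)) ^ 2 ∂μ = (‖v‖ : 𝕜) ^ 2 := by
  have := congrArg (fun r : ℝ ↦ (r : 𝕜)) (hT v)
  rw [← integral_ofReal] at this
  push_cast at this
  exact this

/-- No measurability of `T v` is needed: polarization exhibits `conj (T v) * T w` as a combination
of the integrable functions `‖T v'‖ ^ 2`. -/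
theorem integral_conj_mul_eq_inner_of_integral_norm_sq_eq
    (hT : ∀ v, ∫ x, ‖T v x‖ ^ 2 ∂μ = ‖v‖ ^ 2) (v w : E) :
    ∫ x, (starRingEnd 𝕜) (T v x) * T w x ∂μ = inner 𝕜 v w := by
  set N : E → α → 𝕜 := fun v x ↦ (‖T v x‖ : 𝕜) ^ 2
  have hN : ∀ v, Integrable (N v) μ := integrable_norm_sq_of_integral_norm_sq_eq hT
  have hpolar : ∀ x, (starRingEnd 𝕜) (T v x) * T w x =
      (N (v + w) x - N (v - w) x +
        (N (v - (RCLike.I : 𝕜) • w) x - N (v + (RCLike.I : 𝕜) • w) x) * RCLike.I) / 4 := by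
    intro x
    simpa [N, RCLike.inner_apply, mul_comm] using
      inner_eq_sum_norm_sq_div_four (𝕜 := 𝕜) (E := 𝕜) (T v x) (T w x)
  simp_rw [hpolar]
  have hsub : ∀ a b, Integrable (fun x ↦ N a x - N b x) μ := fun a b ↦ (hN a).sub (hN b)
  rw [integral_div, integral_add (hsub _ _) ((hsub _ _).mul_const _), integral_sub (hN _) (hN _),
    integral_mul_const, integral_sub (hN _) (hN _)]
  simp only [N, integral_norm_sq_eq_of_integral_norm_sq_eq hT]
  exact (inner_eq_sum_norm_sq_div_four v w).symm

end Polarization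

section VoiceTransform

variable {G H : Type*} [NormedAddCommGroup H] [InnerProductSpace ℂ H]

/-- The paper's `V v (x) = ⟨v, π(x)u⟩`, with the arguments of the inner product swapped since
Mathlib's is linear in the second one. -/
noncomputable def voiceTransform (U : G → H →L[ℂ] H) (u : H) : H →ₗ[ℂ] G → ℂ :=
  LinearMap.pi fun x ↦ innerₛₗ ℂ (U x u)

@[simp]
theorem voiceTransform_apply (U : G → H →L[ℂ] H) (u v : H) (x : G) :
    voiceTransform U u v x = inner ℂ (U x u) v :=
  rfl

theorem inner_inv_mul_eq_inner [Group G] {U : G → H →L[ℂ] H}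
    (hmul : ∀ x y, U (x * y) = (U x).comp (U y))
    (hunitary : ∀ x v v', inner ℂ (U x v) (U x v') = (inner ℂ v v' : ℂ)) (x y : G) (u w : H) :
    inner ℂ (U (y⁻¹ * x) u) w = inner ℂ (U x u) (U y w) := by
  rw [← hunitary y, ← ContinuousLinearMap.comp_apply, ← hmul, mul_inv_cancel_left]

end VoiceTransform

theorem kernel_convolution_idempotent_general {G : Type*} [Group G]
    [MeasurableSpace G]
    (μ : Measure G)
    {H : Type*} [NormedAddCommGroup H] [InnerProductSpace ℂ H]
    (U : G → H →L[ℂ] H)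
    (hmul : ∀ x y, U (x * y) = (U x).comp (U y))
    (hunitary : ∀ x v v', inner ℂ (U x v) (U x v') = (inner ℂ v v' : ℂ))
    (u : H)
    (hadmissible : ∀ v : H, ∫ x, ‖(inner ℂ (U x u) v : ℂ)‖ ^ 2 ∂μ = ‖v‖ ^ 2)
    (K : G → ℂ) (hK : ∀ x, K x = (inner ℂ (U x u) u : ℂ)) :
    ∀ x, ∫ y, K y * K (y⁻¹ * x) ∂μ = K x := by
  intro x
  have hshift : ∀ y, K y * K (y⁻¹ * x) =
      starRingEnd ℂ (voiceTransform U u (U x u) y) * voiceTransform U u u y := by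
    intro y
    rw [hK, hK, inner_inv_mul_eq_inner hmul hunitary, voiceTransform_apply, voiceTransform_apply,
      inner_conj_symm, mul_comm]
  simp_rw [hshift]
  rw [integral_conj_mul_eq_inner_of_integral_norm_sq_eq hadmissible, hK]

/-- The reproducing kernel `K = Vu` of an admissible vector `u` (so that the voice transform
`Vv(x) = ⟨v, U(x)u⟩` is an isometry `H → L²(G)`) satisfies the convolution idempotence
`K ∗ K = K`. -/
theorem kernel_convolution_idempotent {G : Type*} [Group G] [TopologicalSpace G]
    [IsTopologicalGroup G] [LocallyCompactSpace G] [SecondCountableTopology G]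
    [MeasurableSpace G] [BorelSpace G]
    (μ : Measure G) [μ.IsHaarMeasure]
    {H : Type*} [NormedAddCommGroup H] [InnerProductSpace ℂ H]
    (U : G → H →L[ℂ] H)
    (hone : U 1 = ContinuousLinearMap.id ℂ H)
    (hmul : ∀ x y, U (x * y) = (U x).comp (U y))
    (hunitary : ∀ x v v', inner ℂ (U x v) (U x v') = (inner ℂ v v' : ℂ))
    (u : H)
    (hadmissible : ∀ v : H, ∫ x, ‖(inner ℂ (U x u) v : ℂ)‖ ^ 2 ∂μ = ‖v‖ ^ 2)
    (K : G → ℂ) (hK : ∀ x, K x = (inner ℂ (U x u) u : ℂ)) :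
    ∀ x, ∫ y, K y * K (y⁻¹ * x) ∂μ = K x :=
  kernel_convolution_idempotent_general μ U hmul hunitary u hadmissible K hK
end

section
/- For the Paley–Wiener space B²_Ω with Ω = [-ω, ω] and the translation representation π(b)v = v(·−b) of (ℝ,+): a vector ψ ∈ B²_Ω is admissible (i.e. v ↦ ⟨v, π(·)ψ⟩ is an isometry B²_Ω → L²(ℝ)) if and only if |ψ̂(ξ)| = 1 for almost every ξ ∈ Ω. -/
/-!
By Plancherel, the voice transform `b ↦ ∫ v̂ conj ψ̂ e^{2πibξ} dξ` is the inverse Fourier transform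
of the `L¹ ∩ L²` function `v̂ · conj ψ̂`, so its squared `L²` norm is `∫_Ω |v̂|² |ψ̂|²`. This equals
`‖v‖²` when `|ψ̂| = 1` a.e. on `Ω`. Conversely, testing admissibility on `v̂ = 1_S` for
`S ⊆ Ω` gives `∫_S |ψ̂|² = |S|` for every measurable `S ⊆ Ω`, which forces `|ψ̂|² = 1` a.e. on `Ω`.

Plancherel for the Fourier integral of an `L¹ ∩ L²` function is deduced from the isometry of the
`L²` Fourier transform: both define the same tempered distribution, by Fubini.
-/

open MeasureTheory Complex Real Set FourierTransform

theorem MeasureTheory.Lp.integral_norm_sq_eq_norm_sq {α E : Type*} {m : MeasurableSpace α}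
    {μ : Measure α} [NormedAddCommGroup E] (u : Lp E 2 μ) : ∫ x, ‖u x‖ ^ 2 ∂μ = ‖u‖ ^ 2 := by
  have h := (Lp.memLp u).eLpNorm_eq_integral_rpow_norm two_ne_zero ENNReal.ofNat_ne_top
  simp only [ENNReal.toReal_ofNat, Real.rpow_two] at h
  rw [Lp.norm_def, h, ENNReal.toReal_ofReal (by positivity), ← Real.rpow_natCast,
    ← Real.rpow_mul (integral_nonneg fun _ => by positivity)]
  norm_num

theorem MeasureTheory.MemLp.integrable_of_forall_notMem_eq_zero {α E : Type*}
    {m : MeasurableSpace α} {μ : Measure α} [NormedAddCommGroup E] {p : ENNReal} {f : α → E}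
    {s : Set α} (hf : MemLp f p μ) (hp : 1 ≤ p) (hμs : μ s ≠ ⊤) (hsupp : ∀ x, x ∉ s → f x = 0) :
    Integrable f μ :=
  have : IsFiniteMeasure (μ.restrict s) := isFiniteMeasure_restrict.2 hμs
  IntegrableOn.integrable_of_forall_notMem_eq_zero ((hf.restrict s).integrable hp) hsupp

theorem MeasureTheory.ae_eq_one_of_forall_setIntegral_eq_measureReal {α : Type*}
    {m : MeasurableSpace α} {μ : Measure α} {s : Set α} (hs : MeasurableSet s) (hμs : μ s ≠ ⊤)
    {f : α → ℝ} (hf : IntegrableOn f s μ)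
    (h : ∀ t ⊆ s, MeasurableSet t → ∫ x in t, f x ∂μ = μ.real t) :
    ∀ᵐ x ∂μ, x ∈ s → f x = 1 := by
  have : IsFiniteMeasure (μ.restrict s) := isFiniteMeasure_restrict.2 hμs
  rw [← ae_restrict_iff' hs]
  refine ae_eq_of_forall_setIntegral_eq_of_sigmaFinite (fun t _ _ => hf.integrable.integrableOn)
    (fun t _ _ => integrableOn_const (by simp)) fun t ht _ => ?_
  rw [Measure.restrict_restrict ht, h _ inter_subset_right (ht.inter hs), setIntegral_const,
    smul_eq_mul, mul_one]

section Plancherel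

variable {V F : Type*} [NormedAddCommGroup V] [InnerProductSpace ℝ V] [FiniteDimensional ℝ V]
  [MeasurableSpace V] [BorelSpace V] [NormedAddCommGroup F]

theorem Real.continuous_fourierInv [NormedSpace ℂ F] {f : V → F} (hf : Integrable f) :
    Continuous (𝓕⁻ f) :=
  VectorFourier.fourierIntegral_continuous Real.continuous_fourierChar (by simp; fun_prop) hf

theorem Real.integral_fourierInv_smul_eq_flip [NormedSpace ℂ F] [CompleteSpace F] {f : V → ℂ}
    {g : V → F} (hf : Integrable f) (hg : Integrable g) :
    ∫ x, 𝓕⁻ f x • g x = ∫ ξ, f ξ • 𝓕⁻ g ξ := by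
  have hflip : (-innerₗ V).flip = -innerₗ V := by
    ext x y; simp [real_inner_comm]
  have := VectorFourier.integral_fourierIntegral_smul_eq_flip (e := 𝐞) (μ := volume)
    (ν := volume) (L := -innerₗ V) Real.continuous_fourierChar (by simp; fun_prop) hf hg
  rwa [hflip] at this

variable [InnerProductSpace ℂ F] [CompleteSpace F]

theorem MeasureTheory.MemLp.fourierInv_toLp_ae_eq {f : V → F} (hf : Integrable f)
    (hf2 : MemLp f 2) : ((𝓕⁻ (hf2.toLp f) : Lp F 2 volume) : V → F) =ᵐ[volume] 𝓕⁻ f := by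
  refine ae_eq_of_integral_contDiff_smul_eq ((Lp.memLp _).locallyIntegrable one_le_two)
    (Real.continuous_fourierInv hf).locallyIntegrable fun φ hφ hφc => ?_
  set ψ : SchwartzMap V ℂ := (hφc.comp_left Complex.ofReal_zero).toSchwartzMap
    (Complex.ofRealCLM.contDiff.comp hφ)
  have hψ : ∀ x, ψ x = φ x := fun x => rfl
  calc ∫ x, φ x • ((𝓕⁻ (hf2.toLp f) : Lp F 2 volume) : V → F) x
      = Lp.toTemperedDistribution (𝓕⁻ (hf2.toLp f) : Lp F 2 volume) ψ := by
        simp only [Lp.toTemperedDistribution_apply, hψ, Complex.coe_smul]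
    _ = Lp.toTemperedDistribution (hf2.toLp f) (𝓕⁻ ψ) := by
        rw [← Lp.fourierInv_toTemperedDistribution_eq, TemperedDistribution.fourierInv_apply]
    _ = ∫ x, 𝓕⁻ (ψ : V → ℂ) x • f x := by
        rw [Lp.toTemperedDistribution_apply, SchwartzMap.fourierInv_coe]
        refine integral_congr_ae ?_
        filter_upwards [hf2.coeFn_toLp] with x hx
        rw [hx]
    _ = ∫ ξ, φ ξ • 𝓕⁻ f ξ := by
        simp only [Real.integral_fourierInv_smul_eq_flip ψ.integrable hf, hψ, Complex.coe_smul]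

theorem Real.integral_norm_sq_fourierInv {f : V → F} (hf : Integrable f) (hf2 : MemLp f 2) :
    ∫ ξ, ‖𝓕⁻ f ξ‖ ^ 2 = ∫ x, ‖f x‖ ^ 2 := by
  calc ∫ ξ, ‖𝓕⁻ f ξ‖ ^ 2 = ∫ ξ, ‖(𝓕⁻ (hf2.toLp f) : Lp F 2 volume) ξ‖ ^ 2 :=
        integral_congr_ae ((hf2.fourierInv_toLp_ae_eq hf).fun_comp (‖·‖ ^ 2)).symm
    _ = ‖hf2.toLp f‖ ^ 2 := by
        rw [Lp.integral_norm_sq_eq_norm_sq, ← Lp.norm_fourier_eq, fourier_fourierInv_eq]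
    _ = ∫ x, ‖f x‖ ^ 2 := by
        rw [← Lp.integral_norm_sq_eq_norm_sq]
        exact integral_congr_ae (hf2.coeFn_toLp.fun_comp (‖·‖ ^ 2))

end Plancherel

theorem Real.fourierInv_eq_integral_mul_exp (f : ℝ → ℂ) (b : ℝ) :
    𝓕⁻ f b = ∫ ξ, f ξ * Complex.exp (2 * π * I * b * ξ) := by
  rw [Real.fourierInv_eq']
  refine integral_congr_ae (Filter.Eventually.of_forall fun ξ => ?_)
  simp only [smul_eq_mul, RCLike.inner_apply, conj_trivial]
  push_cast
  ring_nf

theorem Real.integral_norm_sq_integral_mul_exp {H : ℝ → ℂ} {a b : ℝ} (hH : MemLp H 2)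
    (hsupp : ∀ ξ, ξ ∉ Icc a b → H ξ = 0) :
    ∫ t : ℝ, ‖∫ ξ : ℝ, H ξ * Complex.exp (2 * π * I * t * ξ)‖ ^ 2 = ∫ ξ, ‖H ξ‖ ^ 2 := by
  simp_rw [← Real.fourierInv_eq_integral_mul_exp]
  exact Real.integral_norm_sq_fourierInv
    (hH.integrable_of_forall_notMem_eq_zero one_le_two measure_Icc_lt_top.ne hsupp) hH

/-- Admissibility of `ψ` for `B²_[-ω, ω]` in frequency form: `g = ψ̂`, `h = v̂` ranges over the
space, and the inner integral is the voice transform `Vv(b)`. -/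
def IsPaleyWienerAdmissible (ω : ℝ) (g : ℝ → ℂ) : Prop :=
  ∀ h : ℝ → ℂ, Measurable h → (∀ ξ, ξ ∉ Icc (-ω) ω → h ξ = 0) → MemLp h 2 volume →
    ∫ b : ℝ, ‖∫ ξ : ℝ, h ξ * (starRingEnd ℂ) (g ξ) *
        Complex.exp (2 * π * I * b * ξ)‖ ^ 2 = ∫ ξ : ℝ, ‖h ξ‖ ^ 2

theorem IsPaleyWienerAdmissible.setIntegral_norm_sq_eq {ω : ℝ} {g : ℝ → ℂ}
    (hadm : IsPaleyWienerAdmissible ω g) (hg : MemLp g 2) {S : Set ℝ} (hS : MeasurableSet S)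
    (hSΩ : S ⊆ Icc (-ω) ω) :
    ∫ ξ in S, ‖g ξ‖ ^ 2 = volume.real S := by
  have hind_mul : ∀ ξ, S.indicator 1 ξ * (starRingEnd ℂ) (g ξ)
      = S.indicator (fun ξ => (starRingEnd ℂ) (g ξ)) ξ := fun ξ => by
    by_cases hξ : ξ ∈ S <;> simp [hξ]
  have hadmS := hadm _ (measurable_one.indicator hS)
    (fun ξ hξ => indicator_of_notMem (fun h => hξ (hSΩ h)) _)
    (memLp_indicator_const 2 hS 1 (Or.inr ((measure_mono hSΩ).trans_lt measure_Icc_lt_top).ne))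
  simp only [hind_mul] at hadmS
  rw [Real.integral_norm_sq_integral_mul_exp
    (MemLp.indicator hS (f := fun ξ => (starRingEnd ℂ) (g ξ)) hg.star)
    (fun ξ hξ => indicator_of_notMem (fun h => hξ (hSΩ h)) _)] at hadmS
  calc ∫ ξ in S, ‖g ξ‖ ^ 2 = ∫ ξ, ‖S.indicator (fun ξ => (starRingEnd ℂ) (g ξ)) ξ‖ ^ 2 := by
        rw [← integral_indicator hS]
        congr 1 with ξ
        by_cases hξ : ξ ∈ S <;> simp [hξ]
    _ = ∫ ξ, S.indicator 1 ξ := by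
        rw [hadmS]
        congr 1 with ξ
        by_cases hξ : ξ ∈ S <;> simp [hξ]
    _ = volume.real S := integral_indicator_one hS

theorem paley_wiener_admissible_iff_general (ω : ℝ) (g : ℝ → ℂ) (hg_L2 : MemLp g 2 volume) :
    (∀ h : ℝ → ℂ, Measurable h → (∀ ξ, ξ ∉ Icc (-ω) ω → h ξ = 0) → MemLp h 2 volume →
      ∫ b : ℝ, ‖∫ ξ : ℝ, h ξ * (starRingEnd ℂ) (g ξ) *
          Complex.exp (2 * π * I * b * ξ)‖ ^ 2 = ∫ ξ : ℝ, ‖h ξ‖ ^ 2) ↔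
    (∀ᵐ ξ : ℝ, ξ ∈ Icc (-ω) ω → ‖g ξ‖ = 1) := by
  constructor
  · intro hadm
    have hg_sq := ae_eq_one_of_forall_setIntegral_eq_measureReal measurableSet_Icc
      measure_Icc_lt_top.ne (hg_L2.integrable_norm_pow two_ne_zero).integrableOn
      fun S hSΩ hS => IsPaleyWienerAdmissible.setIntegral_norm_sq_eq hadm hg_L2 hS hSΩ
    filter_upwards [hg_sq] with ξ hξ hξΩ
    exact (pow_eq_one_iff_of_nonneg (norm_nonneg _) two_ne_zero).1 (hξ hξΩ)
  · intro hg_one h _ hsupp hL2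
    have hnorm : (fun ξ => ‖h ξ * (starRingEnd ℂ) (g ξ)‖) =ᵐ[volume] fun ξ => ‖h ξ‖ := by
      filter_upwards [hg_one] with ξ hξ
      by_cases hξΩ : ξ ∈ Icc (-ω) ω
      · rw [norm_mul, RCLike.norm_conj, hξ hξΩ, mul_one]
      · simp [hsupp ξ hξΩ]
    have hH : MemLp (fun ξ => h ξ * (starRingEnd ℂ) (g ξ)) 2 :=
      hL2.congr_norm (hL2.1.mul (Complex.continuous_conj.comp_aestronglyMeasurable hg_L2.1))
        hnorm.symm
    rw [Real.integral_norm_sq_integral_mul_exp hH (a := -ω) (b := ω)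
      fun ξ hξ => by simp [hsupp ξ hξ]]
    exact integral_congr_ae (hnorm.fun_comp (· ^ 2))

/-- Admissibility in the Paley–Wiener space `B²_Ω`, `Ω = [-ω, ω]`, for the translation
representation of `(ℝ,+)`: a vector `ψ ∈ B²_Ω` is admissible (the voice transform
`v ↦ ⟨v, π(·)ψ⟩` is an isometry into `L²(ℝ)`) iff `|ψ̂| = 1` a.e. on `Ω`.
By Plancherel this is stated on the frequency side: `g = ψ̂` is supported in `Ω` and
square-integrable, and for `v ∈ B²_Ω` with `v̂ = h` the voice transform is
`Vv(b) = ∫_Ω h(ξ) conj(g(ξ)) e^{2πibξ} dξ`. -/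
theorem paley_wiener_admissible_iff (ω : ℝ) (hω : 0 < ω)
    (g : ℝ → ℂ) (hg_meas : Measurable g)
    (hg_supp : ∀ ξ, ξ ∉ Icc (-ω) ω → g ξ = 0)
    (hg_L2 : MemLp g 2 volume) :
    (∀ h : ℝ → ℂ, Measurable h → (∀ ξ, ξ ∉ Icc (-ω) ω → h ξ = 0) → MemLp h 2 volume →
      ∫ b : ℝ, ‖∫ ξ : ℝ, h ξ * (starRingEnd ℂ) (g ξ) *
          Complex.exp (2 * π * I * b * ξ)‖ ^ 2 = ∫ ξ : ℝ, ‖h ξ‖ ^ 2) ↔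
    (∀ᵐ ξ : ℝ, ξ ∈ Icc (-ω) ω → ‖g ξ‖ = 1) :=
  paley_wiener_admissible_iff_general ω g hg_L2
end
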